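/- arXiv:0811.1944 — 4 statements merged into one kernel-verified Lean document; each statement's English description precedes it below -/
import Mathlib

section
/- For every θ < 0 and T > 0, if θ = (1/2)·(T + 2e^{−T} + e^{−T}T − 2)/(1 + e^{−T}), then the function T ↦ (1/2)·(T + 2e^{−T} + e^{−T}T − 2)/(1 + e^{−T}) is strictly increasing on (0,∞), tends to 0 as T → 0⁺, and tends to +∞ as T → ∞; hence it never takes negative values. (Equivalently: the parametrization of the switching point of the small periodic orbit is well-defined and monotone in the travel time T.) -/
/-! Rewriting `e^{-T}` as `1 / e^T` gives `g T = T / 2 - 1 + 2 / (e^T + 1)`, i.e. `T / 2 - tanh (T / 2)`.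
Its derivative `1 / 2 - 2 e^T / (e^T + 1)^2` is positive for `T ≠ 0` because `(e^T + 1)^2 > 4 e^T`
(AM-GM), so `g` is strictly increasing on `[0, ∞)` from `g 0 = 0`; continuity gives the limit at `0⁺`,
and `g T ≥ T / 2 - 1` the limit at infinity. -/

open Real Filter Set Topology

noncomputable def switchingParam (T : ℝ) : ℝ :=
  (T + 2 * exp (-T) + exp (-T) * T - 2) / (2 * (1 + exp (-T)))

lemma switchingParam_eq (T : ℝ) : switchingParam T = T / 2 - 1 + 2 / (exp T + 1) := by
  rw [switchingParam, exp_neg]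
  field_simp
  ring

lemma switchingParam_zero : switchingParam 0 = 0 := by
  norm_num [switchingParam_eq]

lemma continuous_switchingParam : Continuous switchingParam := by
  rw [funext switchingParam_eq]
  fun_prop (disch := intro x; positivity)

lemma hasDerivAt_switchingParam (x : ℝ) :
    HasDerivAt switchingParam (1 / 2 - 2 * exp x / (exp x + 1) ^ 2) x := by
  have hden : exp x + 1 ≠ 0 := by positivity
  have h : HasDerivAt (fun T => T / 2 - 1 + 2 / (exp T + 1))
      (1 / 2 + (0 * (exp x + 1) - 2 * exp x) / (exp x + 1) ^ 2) x :=
    (((hasDerivAt_id' x).div_const 2).sub_const 1).add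
      ((hasDerivAt_const x 2).div ((hasDerivAt_exp x).add_const 1) hden)
  rw [funext switchingParam_eq]
  convert h using 1
  ring

lemma deriv_switchingParam_pos {x : ℝ} (hx : x ≠ 0) : 0 < deriv switchingParam x := by
  rw [(hasDerivAt_switchingParam x).deriv, sub_pos, div_lt_iff₀ (by positivity)]
  have : exp x - 1 ≠ 0 := sub_ne_zero.mpr ((exp_eq_one_iff x).not.mpr hx)
  nlinarith [sq_pos_of_ne_zero this]

lemma strictMonoOn_switchingParam : StrictMonoOn switchingParam (Ici 0) := by
  refine strictMonoOn_of_deriv_pos (convex_Ici 0) continuous_switchingParam.continuousOn ?_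
  rw [interior_Ici]
  exact fun x hx => deriv_switchingParam_pos hx.ne'

lemma tendsto_switchingParam_atTop : Tendsto switchingParam atTop atTop := by
  refine tendsto_atTop_mono (fun T => ?_)
    (tendsto_atTop_add_const_right _ (-1) (tendsto_id.atTop_div_const (by norm_num : (0 : ℝ) < 2)))
  rw [switchingParam_eq]
  exact le_add_of_nonneg_right (by positivity)

/-- The function g(T) = (T + 2e^{−T} + Te^{−T} − 2)/(2(1+e^{−T}))
is strictly increasing on (0,∞), tends to 0 as T → 0⁺, tends to +∞ as T → ∞,
and never takes negative values on (0,∞). -/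
theorem switching_point_parametrization_monotone :
    let g : ℝ → ℝ := fun T =>
      (T + 2 * Real.exp (-T) + Real.exp (-T) * T - 2) / (2 * (1 + Real.exp (-T)))
    StrictMonoOn g (Set.Ioi 0) ∧
    Filter.Tendsto g (nhdsWithin 0 (Set.Ioi 0)) (nhds 0) ∧
    Filter.Tendsto g Filter.atTop Filter.atTop ∧
    (∀ T : ℝ, 0 < T → 0 ≤ g T) := by
  change StrictMonoOn switchingParam (Ioi 0) ∧ Tendsto switchingParam (𝓝[>] 0) (𝓝 0) ∧
    Tendsto switchingParam atTop atTop ∧ ∀ T : ℝ, 0 < T → 0 ≤ switchingParam T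
  refine ⟨strictMonoOn_switchingParam.mono Ioi_subset_Ici_self, ?_, tendsto_switchingParam_atTop,
    fun T hT => ?_⟩
  · have h := continuous_switchingParam.continuousAt.continuousWithinAt (s := Ioi 0) (x := 0)
    rwa [ContinuousWithinAt, switchingParam_zero] at h
  · simpa [switchingParam_zero] using
      (strictMonoOn_switchingParam self_mem_Ici hT.le hT).le
end

section
/- For θ ∈ (0,1) and ω > 0, the function t ↦ ωθ·((1−θ)(1 − e^{−t/θ}) + t)/(θ + (1−θ)e^{−t/θ}) mapping sliding time t ≥ 0 to the entry coordinate ξ₂,₁ is strictly increasing on [0,∞), equals 0 at t = 0, and tends to +∞ as t → ∞. Hence for every ξ₂,₁ ≥ 0 there is a unique t ≥ 0 solving the equation. -/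
/-- For θ ∈ (0,1), ω > 0, the map from sliding time t ≥ 0 to the
entry coordinate ξ₂,₁ is strictly increasing, vanishes at 0, tends to ∞, and
hence is a bijection onto [0,∞). -/
theorem sliding_time_entry_coordinate_bijective
    (θ ω : ℝ) (hθ : θ ∈ Set.Ioo (0 : ℝ) 1) (hω : 0 < ω) :
    let F : ℝ → ℝ := fun t =>
      ω * θ * ((1 - θ) * (1 - Real.exp (-t / θ)) + t) /
        (θ + (1 - θ) * Real.exp (-t / θ))
    StrictMonoOn F (Set.Ici 0) ∧
    F 0 = 0 ∧
    Filter.Tendsto F Filter.atTop Filter.atTop ∧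
    (∀ c : ℝ, 0 ≤ c → ∃! t : ℝ, 0 ≤ t ∧ F t = c) := by
  obtain ⟨hθ0, hθ1⟩ := hθ
  have h1θ : (0:ℝ) < 1 - θ := by linarith
  intro F
  have hDpos : ∀ t : ℝ, 0 < θ + (1 - θ) * Real.exp (-t / θ) := by
    intro t
    have := Real.exp_pos (-t / θ)
    nlinarith
  have hωθ : 0 < ω * θ := mul_pos hω hθ0
  -- strict monotonicity
  have hmono : StrictMonoOn F (Set.Ici 0) := by
    intro a ha b hb hab
    have hDab : Real.exp (-b / θ) < Real.exp (-a / θ) := by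
      apply Real.exp_lt_exp.2
      rw [neg_div, neg_div, neg_lt_neg_iff]
      exact div_lt_div_of_pos_right hab hθ0
    have ha0 : (0:ℝ) ≤ a := ha
    have hea := Real.exp_pos (-a / θ)
    have heb := Real.exp_pos (-b / θ)
    show ω * θ * ((1 - θ) * (1 - Real.exp (-a / θ)) + a) /
        (θ + (1 - θ) * Real.exp (-a / θ)) <
      ω * θ * ((1 - θ) * (1 - Real.exp (-b / θ)) + b) /
        (θ + (1 - θ) * Real.exp (-b / θ))
    rw [div_lt_div_iff₀ (hDpos a) (hDpos b)]
    nlinarith [mul_pos hωθ (mul_pos h1θ (sub_pos.2 hDab)),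
      mul_pos (mul_pos hωθ (mul_pos h1θ (sub_pos.2 hDab))) (hDpos a),
      mul_pos (mul_pos hωθ (sub_pos.2 hab)) (hDpos a),
      mul_nonneg (mul_nonneg hωθ.le ha0) (mul_pos h1θ (sub_pos.2 hDab)).le]
  have hF0 : F 0 = 0 := by
    show ω * θ * ((1 - θ) * (1 - Real.exp (-0 / θ)) + 0) / _ = 0
    simp
  -- tends to infinity
  have hbound : ∀ t : ℝ, 0 ≤ t → ω * θ * t ≤ F t := by
    intro t ht
    have he1 : Real.exp (-t / θ) ≤ 1 := by
      apply Real.exp_le_one_iff.2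
      rw [neg_div, neg_nonpos]
      positivity
    have hep := Real.exp_pos (-t / θ)
    show ω * θ * t ≤ ω * θ * ((1 - θ) * (1 - Real.exp (-t / θ)) + t) /
        (θ + (1 - θ) * Real.exp (-t / θ))
    rw [le_div_iff₀ (hDpos t)]
    nlinarith [mul_nonneg (mul_nonneg hωθ.le ht) (mul_nonneg h1θ.le (sub_nonneg.2 he1)),
      mul_nonneg hωθ.le (mul_nonneg h1θ.le (sub_nonneg.2 he1))]
  have htend : Filter.Tendsto F Filter.atTop Filter.atTop := by
    apply Filter.tendsto_atTop_mono' _ _ (Filter.Tendsto.const_mul_atTop hωθ Filter.tendsto_id)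
    filter_upwards [Filter.eventually_ge_atTop (0:ℝ)] with t ht
    exact hbound t ht
  -- continuity
  have hcont : Continuous F := by
    apply Continuous.div
    · fun_prop
    · fun_prop
    · intro t
      exact ne_of_gt (hDpos t)
  refine ⟨hmono, hF0, htend, ?_⟩
  intro c hc
  obtain ⟨T, hT0, hTc⟩ : ∃ T : ℝ, 0 ≤ T ∧ c ≤ F T := by
    have := (htend.eventually_ge_atTop c).and (Filter.eventually_ge_atTop (0:ℝ))
    obtain ⟨T, h1, h2⟩ := this.exists
    exact ⟨T, h2, h1⟩
  have : c ∈ Set.Icc (F 0) (F T) := by rw [hF0]; exact ⟨hc, hTc⟩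
  obtain ⟨t, ht, hFt⟩ := intermediate_value_Icc hT0 hcont.continuousOn this
  refine ⟨t, ⟨ht.1, hFt⟩, ?_⟩
  rintro s ⟨hs0, hFs⟩
  exact hmono.injOn hs0 ht.1 (by rw [hFs, hFt])
end

section
/- For θ ∈ (0,1), the parametrized curve ξ₁(t) = −(ω²θ²/2)·[((1−θ)(1−e^{−t/θ}) + t)/(θ + (1−θ)e^{−t/θ})]² and η(t) = ω²(1−θ)·(θ − (θ+t)e^{−t/θ})/(θ + (1−θ)e^{−t/θ}) satisfies: η(0) = 0, ξ₁(0) = 0, and the limit of η(t)/ξ₁(t) as t → 0⁺ equals (θ−1)/θ. -/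
/-!
With `x = t / θ` and `u = exp (-x)`, dividing numerator and denominator of `η t / ξ₁ t` by `t ^ 2`
turns the ratio into `-2 (1 - θ) (θ + (1 - θ) u) A(x) / (θ ((1 - θ) B(x) + θ) ^ 2)`, where
`A(x) = (1 - (1 + x) e^{-x}) / x ^ 2 → 1/2` and `B(x) = (1 - e^{-x}) / x → 1` by l'Hôpital's rule.
Since `u → 1`, the ratio tends to `-2 (1 - θ) · 1/2 / θ = (θ - 1) / θ`.
-/

open Real Filter Topology

lemma tendsto_one_sub_exp_neg_div_self :
    Tendsto (fun x : ℝ => (1 - exp (-x)) / x) (𝓝[≠] 0) (𝓝 1) := by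
  refine HasDerivAt.lhopital_zero_nhds (f' := fun x => exp (-x)) (g' := fun _ => 1)
    (.of_forall fun x => by simpa using ((hasDerivAt_neg x).exp).const_sub 1)
    (.of_forall hasDerivAt_id) (.of_forall fun _ => one_ne_zero) ?_ tendsto_id ?_
  · simpa using (by fun_prop : Continuous fun x : ℝ => 1 - exp (-x)).tendsto 0
  · simpa using (by fun_prop : Continuous fun x : ℝ => exp (-x)).tendsto 0

lemma tendsto_one_sub_one_add_mul_exp_neg_div_sq :
    Tendsto (fun x : ℝ => (1 - (1 + x) * exp (-x)) / x ^ 2) (𝓝[≠] 0) (𝓝 (1 / 2)) := by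
  refine HasDerivAt.lhopital_zero_nhdsNE (f' := fun x => x * exp (-x)) (g' := fun x => 2 * x)
    (.of_forall fun x => ?_) (.of_forall fun x => by simpa using hasDerivAt_pow 2 x)
    (eventually_mem_nhdsWithin.mono fun x hx => mul_ne_zero two_ne_zero hx) ?_ ?_ ?_
  · have h : HasDerivAt (fun x => 1 - (1 + x) * exp (-x))
        (-(1 * exp (-x) + (1 + x) * (exp (-x) * -1))) x :=
      (((hasDerivAt_id' x).const_add 1).mul (hasDerivAt_neg x).exp).const_sub 1
    exact h.congr_deriv (by ring)
  · exact tendsto_nhdsWithin_of_tendsto_nhds (by simpa using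
      (by fun_prop : Continuous fun x : ℝ => 1 - (1 + x) * exp (-x)).tendsto 0)
  · exact tendsto_nhdsWithin_of_tendsto_nhds (by simpa using (continuous_pow 2).tendsto (0 : ℝ))
  · have h : Tendsto (fun x : ℝ => exp (-x) / 2) (𝓝[≠] 0) (𝓝 (1 / 2)) :=
      tendsto_nhdsWithin_of_tendsto_nhds (by simpa using
        (by fun_prop : Continuous fun x : ℝ => exp (-x) / 2).tendsto 0)
    refine h.congr' (eventually_mem_nhdsWithin.mono fun x (hx : x ≠ 0) => ?_)
    field_simp

lemma tendsto_div_const_nhdsNE {c : ℝ} (hc : c ≠ 0) :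
    Tendsto (fun t : ℝ => t / c) (𝓝[≠] 0) (𝓝[≠] 0) :=
  tendsto_nhdsWithin_iff.2
    ⟨tendsto_nhdsWithin_of_tendsto_nhds (by simpa using (continuous_id.div_const c).tendsto 0),
      eventually_mem_nhdsWithin.mono fun _ ht => div_ne_zero ht hc⟩

lemma tendsto_pdm_ratio_rescaled {θ : ℝ} (hθ : θ ≠ 0) :
    Tendsto (fun x : ℝ => -2 * (1 - θ) * (θ + (1 - θ) * exp (-x)) *
        ((1 - (1 + x) * exp (-x)) / x ^ 2) / (θ * ((1 - θ) * ((1 - exp (-x)) / x) + θ) ^ 2))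
      (𝓝[≠] 0) (𝓝 ((θ - 1) / θ)) := by
  have hexp : Tendsto (fun x : ℝ => exp (-x)) (𝓝[≠] 0) (𝓝 1) :=
    tendsto_nhdsWithin_of_tendsto_nhds (by simpa using
      (by fun_prop : Continuous fun x : ℝ => exp (-x)).tendsto 0)
  have hnum := ((tendsto_const_nhds (x := -2 * (1 - θ))).mul
    ((tendsto_const_nhds (x := θ)).add ((tendsto_const_nhds (x := 1 - θ)).mul hexp))).mul
    tendsto_one_sub_one_add_mul_exp_neg_div_sq
  have hden := (tendsto_const_nhds (x := θ)).mul
    ((((tendsto_const_nhds (x := 1 - θ)).mul tendsto_one_sub_exp_neg_div_self).add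
      (tendsto_const_nhds (x := θ))).pow 2)
  have hlim : -2 * (1 - θ) * (θ + (1 - θ) * 1) * (1 / 2) / (θ * ((1 - θ) * 1 + θ) ^ 2) =
      (θ - 1) / θ := by
    field_simp
    ring
  rw [← hlim]
  exact hnum.div hden (by simpa using hθ)

lemma pdm_ratio_eq {θ ω t u : ℝ} (hθ : θ ≠ 0) (hω : ω ≠ 0) (ht : t ≠ 0)
    (hD : θ + (1 - θ) * u ≠ 0) (hN : (1 - θ) * (1 - u) + t ≠ 0) :
    ω ^ 2 * (1 - θ) * (θ - (θ + t) * u) / (θ + (1 - θ) * u) /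
        (-(ω ^ 2 * θ ^ 2 / 2) * (((1 - θ) * (1 - u) + t) / (θ + (1 - θ) * u)) ^ 2) =
      -2 * (1 - θ) * (θ + (1 - θ) * u) * ((1 - (1 + t / θ) * u) / (t / θ) ^ 2) /
        (θ * ((1 - θ) * ((1 - u) / (t / θ)) + θ) ^ 2) := by
  have hB : (1 - θ) * ((1 - u) / (t / θ)) + θ = θ * ((1 - θ) * (1 - u) + t) / t := by
    field_simp
  rw [hB]
  field_simp

/-- The parametrized discontinuity-mapping curve (ξ₁(t), η(t))
satisfies ξ₁(0) = 0, η(0) = 0, and η(t)/ξ₁(t) → (θ−1)/θ as t → 0⁺. -/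
theorem pdm_one_sided_slope (θ ω : ℝ) (hθ : θ ∈ Set.Ioo (0 : ℝ) 1) (hω : 0 < ω) :
    let ξ₁ : ℝ → ℝ := fun t =>
      -(ω ^ 2 * θ ^ 2 / 2) *
        (((1 - θ) * (1 - Real.exp (-t / θ)) + t) /
          (θ + (1 - θ) * Real.exp (-t / θ))) ^ 2
    let η : ℝ → ℝ := fun t =>
      ω ^ 2 * (1 - θ) * (θ - (θ + t) * Real.exp (-t / θ)) /
        (θ + (1 - θ) * Real.exp (-t / θ))
    η 0 = 0 ∧ ξ₁ 0 = 0 ∧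
    Filter.Tendsto (fun t => η t / ξ₁ t) (nhdsWithin 0 (Set.Ioi 0))
      (nhds ((θ - 1) / θ)) := by
  obtain ⟨hθ₀, hθ₁⟩ := hθ
  intro ξ₁ η
  refine ⟨by simp [η], by simp [ξ₁], ?_⟩
  have hlim := (tendsto_pdm_ratio_rescaled hθ₀.ne').comp
    ((tendsto_div_const_nhdsNE hθ₀.ne').mono_left (nhdsWithin_mono _ fun _ ht => ne_of_gt ht))
  refine hlim.congr' (eventually_mem_nhdsWithin.mono fun t (ht : 0 < t) => ?_)
  have hu : exp (-(t / θ)) < 1 := exp_lt_one_iff.2 (neg_neg_of_pos (div_pos ht hθ₀))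
  have hD : 0 < θ + (1 - θ) * exp (-(t / θ)) :=
    add_pos hθ₀ (mul_pos (sub_pos.2 hθ₁) (exp_pos _))
  have hN : 0 < (1 - θ) * (1 - exp (-(t / θ))) + t :=
    add_pos_of_nonneg_of_pos (mul_nonneg (sub_pos.2 hθ₁).le (sub_nonneg.2 hu.le)) ht
  simp only [η, ξ₁, Function.comp_apply, neg_div]
  exact (pdm_ratio_eq hθ₀.ne' hω.ne' ht.ne' hD.ne' hN.ne').symm
end

section
/- Let s₀ = s₀(θ) be the unique positive root of (1−θ)e^{−s} − 1 + s + θ = 0 for θ < 0. Then the denominator θ + s₀(θ) appearing in the first-order switching-time expansion is strictly positive, i.e. s₀(θ) > −θ for all θ < 0. -/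
/-- The unique positive root s₀(θ) of (1−θ)e^{−s} − 1 + s + θ = 0
for θ < 0 satisfies s₀(θ) > −θ, so the denominator θ + s₀(θ) is positive. -/
theorem s0_greater_than_neg_theta (θ s₀ : ℝ) (hθ : θ < 0) (hs : 0 < s₀)
    (hroot : (1 - θ) * Real.exp (-s₀) - 1 + s₀ + θ = 0) :
    -θ < s₀ ∧ 0 < θ + s₀ := by
  have hE : 1 + s₀ < Real.exp s₀ := by
    have := Real.add_one_lt_exp (ne_of_gt hs); linarith
  have hmul : Real.exp (-s₀) * Real.exp s₀ = 1 := by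
    rw [← Real.exp_add]; simp
  have hepos : 0 < Real.exp (-s₀) := Real.exp_pos _
  have key : θ + s₀ > 0 := by nlinarith [Real.exp_pos s₀]
  exact ⟨by linarith, key⟩
end
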